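/- Let $P_1, \ldots, P_r$ be orthogonal projections on a finite-dimensional Hilbert space and let $P_0 = \sum_{i=1}^r P_i$. Then $0 \le \sum_{i=1}^r (2P_i - P_0)_+ \le I$, i.e., the operators $(2P_i - P_0)_+$ form an (incomplete) POVM. -/

import Mathlib

open Matrix
open scoped ComplexOrder

noncomputable def matAbs {m : ℕ} (A : Matrix (Fin m) (Fin m) ℂ) : Matrix (Fin m) (Fin m) ℂ :=
  (Matrix.posSemidef_conjTranspose_mul_self A).1.eigenvectorUnitary.1 *
    diagonal ((↑) ∘ (Real.sqrt ∘ (Matrix.posSemidef_conjTranspose_mul_self A).1.eigenvalues)) *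
    (star (Matrix.posSemidef_conjTranspose_mul_self A).1.eigenvectorUnitary : Matrix (Fin m) (Fin m) ℂ)

noncomputable def traceNorm {m : ℕ} (A : Matrix (Fin m) (Fin m) ℂ) : ℝ :=
  ((matAbs A).trace).re

open Classical in
noncomputable def psdSqrt {m : ℕ} (A : Matrix (Fin m) (Fin m) ℂ) : Matrix (Fin m) (Fin m) ℂ :=
  if h : A.PosSemidef then h.1.eigenvectorUnitary.1 *
    diagonal ((↑) ∘ (Real.sqrt ∘ h.1.eigenvalues)) *
    (star h.1.eigenvectorUnitary : Matrix (Fin m) (Fin m) ℂ) else 0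

noncomputable def fid {m : ℕ} (A B : Matrix (Fin m) (Fin m) ℂ) : ℝ :=
  traceNorm (psdSqrt A * psdSqrt B)

noncomputable def matPosPart {m : ℕ} (A : Matrix (Fin m) (Fin m) ℂ) : Matrix (Fin m) (Fin m) ℂ :=
  (2⁻¹ : ℂ) • (matAbs A + A)

noncomputable def matNegPart {m : ℕ} (A : Matrix (Fin m) (Fin m) ℂ) : Matrix (Fin m) (Fin m) ℂ :=
  (2⁻¹ : ℂ) • (matAbs A - A)

/-!
Write `t = ∑ j, p j`, `r` for the number of projections and `aᵢ = 2 pᵢ - t`. Idempotency gives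
`∑ aᵢ² = 4 t + (r - 4) t²`, and the operator Cauchy–Schwarz inequality bounds `Y = ∑ |aᵢ|` by
`Y² ≤ r ∑ aᵢ² = Z² - 4 (1 - t)² ≤ Z²` with `Z = 2 - (2 - r) t`, which is nonnegative because
`0 ≤ t ≤ r`. Since the square root is operator monotone, `Y ≤ Z`, hence
`2 ∑ (aᵢ)₊ = Y + ∑ aᵢ = Y + (2 - r) t ≤ Z + (2 - r) t = 2`.
-/

open Finset

lemma le_of_two_nsmul_le_two_nsmul {M : Type*} [AddCommGroup M] [PartialOrder M] [Module ℝ M]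
    [PosSMulReflectLE ℝ M] {a b : M} (h : 2 • a ≤ 2 • b) : a ≤ b := by
  rw [← Nat.cast_smul_eq_nsmul ℝ, ← Nat.cast_smul_eq_nsmul ℝ] at h
  exact le_of_smul_le_smul_left h two_pos

lemma sq_sum_le_card_nsmul_sum_sq {A ι : Type*} [Ring A] [StarRing A] [PartialOrder A]
    [StarOrderedRing A] [Module ℝ A] [PosSMulReflectLE ℝ A] (s : Finset ι) {b : ι → A}
    (hb : ∀ i ∈ s, IsSelfAdjoint (b i)) :
    (∑ i ∈ s, b i) ^ 2 ≤ #s • ∑ i ∈ s, b i ^ 2 := by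
  have hsum : ∑ i ∈ s, ∑ j ∈ s, (b i - b j) ^ 2
      = 2 • (#s • ∑ i ∈ s, b i ^ 2 - (∑ i ∈ s, b i) ^ 2) := by
    have expand (i j : ι) : (b i - b j) ^ 2 = b i ^ 2 + b j ^ 2 - (b i * b j + b j * b i) := by
      noncomm_ring
    simp only [expand, sum_add_distrib, sum_sub_distrib, sum_const, ← sum_mul, ← mul_sum,
      ← smul_sum]
    noncomm_ring
  have hnonneg : 0 ≤ ∑ i ∈ s, ∑ j ∈ s, (b i - b j) ^ 2 :=
    sum_nonneg fun i hi => sum_nonneg fun j hj => ((hb i hi).sub (hb j hj)).sq_nonneg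
  rw [hsum, ← smul_zero 2] at hnonneg
  exact sub_nonneg.mp (le_of_two_nsmul_le_two_nsmul hnonneg)

lemma two_nsmul_one_sub_add_nsmul_nonneg {A : Type*} [Ring A] [PartialOrder A]
    [IsOrderedAddMonoid A] [ZeroLEOneClass A] {t : A} {r : ℕ} (ht₀ : 0 ≤ t) (ht : t ≤ r • 1) :
    0 ≤ 2 • (1 - t) + r • t := by
  rcases Nat.lt_or_ge r 2 with hr | hr
  · have ht₁ : t ≤ 1 := ht.trans (by interval_cases r <;> simp)
    exact add_nonneg (nsmul_nonneg (sub_nonneg.mpr ht₁) 2) (nsmul_nonneg ht₀ r)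
  · obtain ⟨k, rfl⟩ := Nat.exists_eq_add_of_le' hr
    have : 2 • (1 - t) + (k + 2) • t = 2 • 1 + k • t := by module
    rw [this]
    exact add_nonneg (nsmul_nonneg zero_le_one 2) (nsmul_nonneg ht₀ k)

section TwoNsmulSubSum

variable {A ι : Type*} [Ring A] [Fintype ι] {p : ι → A}

lemma isSelfAdjoint_two_nsmul_sub_sum [StarRing A] (hp : ∀ i, IsSelfAdjoint (p i)) (i : ι) :
    IsSelfAdjoint (2 • p i - ∑ j, p j) := by
  rw [two_nsmul]
  exact ((hp i).add (hp i)).sub (isSelfAdjoint_sum _ fun j _ => hp j)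

lemma sum_sq_two_nsmul_sub_sum (hp : ∀ i, IsIdempotentElem (p i)) :
    ∑ i, (2 • p i - ∑ j, p j) ^ 2
      = 4 • ∑ j, p j + Fintype.card ι • (∑ j, p j) ^ 2 - 4 • (∑ j, p j) ^ 2 := by
  set t := ∑ j, p j
  have expand (i : ι) : (2 • p i - t) ^ 2 = 4 • p i - 2 • (p i * t + t * p i) + t ^ 2 :=
    calc (2 • p i - t) ^ 2 = 4 • (p i * p i) - 2 • (p i * t + t * p i) + t ^ 2 := by
          noncomm_ring
      _ = _ := by rw [(hp i).eq]
  simp only [expand, sum_add_distrib, sum_sub_distrib, ← smul_sum, ← sum_mul, ← mul_sum,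
    sum_const, card_univ]
  noncomm_ring

end TwoNsmulSubSum

section CStarAlgebra

variable {A : Type*} [CStarAlgebra A] [PartialOrder A] [StarOrderedRing A]

lemma CFC.le_of_sq_le_sq {a b : A} (ha : 0 ≤ a) (hb : 0 ≤ b) (h : a ^ 2 ≤ b ^ 2) : a ≤ b := by
  simpa [CFC.sqrt_sq a, CFC.sqrt_sq b] using CFC.sqrt_le_sqrt _ _ h

theorem sum_posPart_two_nsmul_sub_sum_le_one {ι : Type*} [Fintype ι] {p : ι → A}
    (hp : ∀ i, IsStarProjection (p i)) : ∑ i, (2 • p i - ∑ j, p j)⁺ ≤ 1 := by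
  have ha := isSelfAdjoint_two_nsmul_sub_sum fun i => (hp i).isSelfAdjoint
  set t := ∑ j, p j
  set r := Fintype.card ι
  set Y := ∑ i, CFC.abs (2 • p i - t)
  set Z := 2 • (1 - t) + r • t
  have hZ : 0 ≤ Z := two_nsmul_one_sub_add_nsmul_nonneg
    (sum_nonneg fun i _ => (hp i).nonneg) (sum_le_card_nsmul _ _ _ fun i _ => (hp i).le_one)
  have hY : Y ^ 2 ≤ Z ^ 2 := calc
    Y ^ 2 ≤ r • ∑ i, CFC.abs (2 • p i - t) ^ 2 :=
      sq_sum_le_card_nsmul_sum_sq _ fun i _ => (CFC.abs_nonneg _).isSelfAdjoint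
    _ = r • ∑ i, (2 • p i - t) ^ 2 := by simp_rw [sq, CFC.abs_mul_abs, (ha _).star_eq]
    _ ≤ r • ∑ i, (2 • p i - t) ^ 2 + 4 • (1 - t) ^ 2 := by
      refine le_add_of_nonneg_right (nsmul_nonneg (IsSelfAdjoint.sq_nonneg ?_) 4)
      exact (IsSelfAdjoint.one A).sub (isSelfAdjoint_sum _ fun i _ => (hp i).isSelfAdjoint)
    _ = Z ^ 2 := by
      rw [sum_sq_two_nsmul_sub_sum fun i => (hp i).isIdempotentElem]
      simp only [Z, sq, mul_add, add_mul, mul_sub, sub_mul, smul_mul_assoc, mul_smul_comm,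
        one_mul, mul_one]
      module
  have hYZ : Y ≤ Z := CFC.le_of_sq_le_sq (sum_nonneg fun i _ => CFC.abs_nonneg _) hZ hY
  apply le_of_two_nsmul_le_two_nsmul
  calc 2 • ∑ i, (2 • p i - t)⁺ = Y + (2 • t - r • t) := by
        simp_rw [smul_sum, ← CFC.abs_add_self _ (ha _), sum_add_distrib, sum_sub_distrib,
          ← smul_sum, sum_const, card_univ]
        rfl
    _ ≤ Z + (2 • t - r • t) := by gcongr
    _ = 2 • 1 := by module

end CStarAlgebra

open scoped Matrix.Norms.L2Operator MatrixOrder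

lemma matAbs_eq_abs {m : ℕ} (X : Matrix (Fin m) (Fin m) ℂ) : matAbs X = CFC.abs X := by
  rw [CFC.abs, CFC.sqrt_eq_real_sqrt _ (star_mul_self_nonneg X), cfcₙ_eq_cfc,
    Matrix.star_eq_conjTranspose, (Matrix.isHermitian_conjTranspose_mul_self X).cfc_eq]
  rfl

lemma matPosPart_eq_posPart {m : ℕ} {X : Matrix (Fin m) (Fin m) ℂ} (hX : IsSelfAdjoint X) :
    matPosPart X = X⁺ := by
  rw [matPosPart, matAbs_eq_abs, CFC.abs_add_self X hX, ← Nat.cast_smul_eq_nsmul ℂ,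
    Nat.cast_ofNat, inv_smul_smul₀ two_ne_zero]

theorem posPart_projections_povm {d r : ℕ} (P : Fin r → Matrix (Fin d) (Fin d) ℂ)
    (hP : ∀ i, (P i).IsHermitian) (hP2 : ∀ i, P i * P i = P i) :
    (∑ i, matPosPart (2 • P i - ∑ j, P j)).PosSemidef ∧
    (1 - ∑ i, matPosPart (2 • P i - ∑ j, P j)).PosSemidef := by
  have hproj (i : Fin r) : IsStarProjection (P i) := ⟨hP2 i, (hP i).isSelfAdjoint⟩
  simp only [matPosPart_eq_posPart, isSelfAdjoint_two_nsmul_sub_sum fun i => (hP i).isSelfAdjoint]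
  exact ⟨Matrix.nonneg_iff_posSemidef.mp (sum_nonneg fun i _ => CFC.posPart_nonneg _),
    Matrix.le_iff.mp (sum_posPart_two_nsmul_sub_sum_le_one hproj)⟩
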